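/- The nil radical R of the Clifford algebra C = C(p,q,z) has a grading R = ⊕_{i≥1} R_i, where R_i is the linear span of basis elements e_I e_J e_K with I ⊆ P, J ⊆ M, K ⊆ Z and |K| = i, and this satisfies R_i · R_j ⊆ R_{i+j}. -/

import Mathlib

open Classical in
/-- The weight of generator `i`: `1` on `P`, `-1` on `M`, `0` elsewhere. -/
noncomputable def cliffordWeight {ι : Type} (P M : Set ι) (i : ι) : ℝ :=
  if i ∈ P then 1 else if i ∈ M then -1 else 0

/-- The diagonal bilinear form `B(x,y) = ∑ i, w i * x i * y i` on `ι →₀ ℝ`. -/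
noncomputable def cliffordBilin {ι : Type} (P M : Set ι) :
    (ι →₀ ℝ) →ₗ[ℝ] (ι →₀ ℝ) →ₗ[ℝ] ℝ :=
  Finsupp.lsum ℝ fun i =>
    LinearMap.toSpanSingleton ℝ ((ι →₀ ℝ) →ₗ[ℝ] ℝ) (cliffordWeight P M i • Finsupp.lapply i)

/-- The quadratic form of `C(p,q,z)`. -/
noncomputable def cliffordQ {ι : Type} (P M : Set ι) : QuadraticForm ℝ (ι →₀ ℝ) :=
  LinearMap.BilinMap.toQuadraticMap (cliffordBilin P M)

/-- The Clifford algebra `C(p,q,z)` (`Z` is the complement of `P ∪ M` in `ι`). -/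
noncomputable abbrev Cl {ι : Type} (P M : Set ι) := CliffordAlgebra (cliffordQ P M)

/-- The generator `e_i` of `C(p,q,z)`. -/
noncomputable def gen {ι : Type} (P M : Set ι) (i : ι) : Cl P M :=
  CliffordAlgebra.ι (cliffordQ P M) (Finsupp.single i 1)

/-- The product `e_I` over a finite ordered subset `I`. -/
noncomputable def prodGen {ι : Type} [LinearOrder ι] (P M : Set ι) (s : Finset ι) : Cl P M :=
  ((s.sort (· ≤ ·)).map (gen P M)).prod

/-- The subalgebra `C(p,q)` generated by the `e_λ`, `λ ∈ P ∪ M`. -/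
noncomputable def Cpq {ι : Type} (P M : Set ι) : Subalgebra ℝ (Cl P M) :=
  Algebra.adjoin ℝ (gen P M '' (P ∪ M))

/-- The ideal generated by the nilpotent generators `e_λ`, `λ ∈ Z`. -/
noncomputable def nilGenIdeal {ι : Type} (P M Z : Set ι) : TwoSidedIdeal (Cl P M) :=
  TwoSidedIdeal.span (gen P M '' Z)

/-- The nil radical of a ring: the supremum (sum) of all nil two-sided ideals. -/
def nilRad (A : Type*) [Ring A] : TwoSidedIdeal A :=
  sSup {I : TwoSidedIdeal A | ∀ x ∈ I, IsNilpotent x}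

/-- A two-sided ideal `I` is nilpotent: `Iⁿ = 0`, phrased via products of `n` elements. -/
def TwoSidedIdeal.IsNilpotentIdeal {A : Type*} [Ring A] (I : TwoSidedIdeal A) : Prop :=
  ∃ n : ℕ, 0 < n ∧ ∀ l : List A, l.length = n → (∀ x ∈ l, x ∈ I) → l.prod = 0

/-- A two-sided ideal is prime. -/
def TwoSidedIdeal.IsPrimeIdeal {A : Type*} [Ring A] (I : TwoSidedIdeal A) : Prop :=
  I ≠ ⊤ ∧ ∀ J K : TwoSidedIdeal A, (∀ a ∈ J, ∀ b ∈ K, a * b ∈ I) → J ≤ I ∨ K ≤ I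

/-- The `n`-th graded piece `R_n` of the nil radical: the span of the basis elements
`e_I e_J e_K` with `|K| = n`. -/
noncomputable def gradePiece {ι : Type} [LinearOrder ι] (P M Z : Set ι) (n : ℕ) :
    Submodule ℝ (Cl P M) :=
  Submodule.span ℝ {x | ∃ I J K : Finset ι, ↑I ⊆ P ∧ ↑J ⊆ M ∧ ↑K ⊆ Z ∧ K.card = n ∧
    x = prodGen P M I * prodGen P M J * prodGen P M K}

/-! Every word `e_{λ₁} ⋯ e_{λᵣ}` in the generators lies in `R_k`, where `k` counts the letters
from `Z`: anticommutation reorders a word without repeated letters into `± e_I e_J e_K`, and a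
repeated letter `λ` collapses to the scalar `e_λ² ∈ {1, -1, 0}`, which is `0` when `λ ∈ Z`.
Hence `R_i R_j ⊆ R_{i+j}`, so `⨁_{i ≥ 1} R_i` is a two-sided ideal; it contains every `e_λ`,
`λ ∈ Z`, and each of its spanning words has such a factor, so it is `R`. The sum is direct
because the automorphism of `C` doubling the `e_λ`, `λ ∈ Z`, acts on `R_i` as `2 ^ i`. -/

open Classical

section AnticommutingProducts

variable {ι A : Type*} [Ring A] {f : ι → A}

theorem List.Perm.prod_map_eq_or_eq_neg (hf : ∀ i j, i ≠ j → f i * f j = -(f j * f i))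
    {l₁ l₂ : List ι} (h : l₁.Perm l₂) (hl : l₁.Nodup) :
    (l₁.map f).prod = (l₂.map f).prod ∨ (l₁.map f).prod = -(l₂.map f).prod := by
  induction h with
  | nil => exact Or.inl rfl
  | cons x _ ih =>
    rcases ih hl.of_cons with h | h <;> simp [h]
  | swap x y l =>
    have hyx : y ≠ x := fun e => (List.nodup_cons.mp hl).1 (e ▸ List.mem_cons_self)
    right
    simp only [List.map_cons, List.prod_cons, ← mul_assoc, hf y x hyx, neg_mul]
  | trans h₁₂ _ ih₁₂ ih₂₃ =>
    rcases ih₁₂ hl with h | h <;> rcases ih₂₃ (h₁₂.nodup hl) with h' | h' <;> simp [h, h']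

end AnticommutingProducts

variable {ι : Type} {P M Z : Set ι}

lemma cliffordBilin_single_left (i : ι) (a : ℝ) (y : ι →₀ ℝ) :
    cliffordBilin P M (Finsupp.single i a) y = a * (cliffordWeight P M i * y i) := by
  simp [cliffordBilin, Finsupp.lsum_single, LinearMap.toSpanSingleton_apply]

lemma cliffordWeight_eq_zero_of_mem (hPZ : Disjoint P Z) (hMZ : Disjoint M Z) {i : ι}
    (hi : i ∈ Z) : cliffordWeight P M i = 0 := by
  rw [cliffordWeight, if_neg (hPZ.notMem_of_mem_right hi), if_neg (hMZ.notMem_of_mem_right hi)]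

lemma cliffordQ_single (i : ι) :
    cliffordQ P M (Finsupp.single i 1) = cliffordWeight P M i := by
  simp [cliffordQ, cliffordBilin_single_left]

lemma gen_mul_self (i : ι) :
    gen P M i * gen P M i = algebraMap ℝ (Cl P M) (cliffordWeight P M i) := by
  rw [gen, CliffordAlgebra.ι_sq_scalar, cliffordQ_single]

lemma gen_mul_gen_of_ne {i j : ι} (h : i ≠ j) :
    gen P M i * gen P M j = -(gen P M j * gen P M i) := by
  have hpolar := CliffordAlgebra.ι_mul_ι_add_swap (Q := cliffordQ P M)
    (Finsupp.single i 1) (Finsupp.single j 1)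
  simp only [cliffordQ, LinearMap.BilinMap.polar_toQuadraticMap, cliffordBilin_single_left,
    Finsupp.single_apply, if_neg h, if_neg (Ne.symm h), mul_zero, add_zero] at hpolar
  exact eq_neg_of_add_eq_zero_left hpolar

variable (P M) in
noncomputable def genWord (l : List ι) : Cl P M := (l.map (gen P M)).prod

@[simp] lemma genWord_nil : genWord P M [] = 1 := rfl

@[simp] lemma genWord_cons (i : ι) (l : List ι) :
    genWord P M (i :: l) = gen P M i * genWord P M l := List.prod_cons

lemma genWord_append (l₁ l₂ : List ι) :
    genWord P M (l₁ ++ l₂) = genWord P M l₁ * genWord P M l₂ := by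
  simp [genWord]

lemma genWord_eq_or_eq_neg_of_perm {l₁ l₂ : List ι} (h : l₁.Perm l₂) (hl : l₁.Nodup) :
    genWord P M l₁ = genWord P M l₂ ∨ genWord P M l₁ = -genWord P M l₂ :=
  h.prod_map_eq_or_eq_neg (fun _ _ => gen_mul_gen_of_ne) hl

variable (Z) in
noncomputable def scaleNull : (ι →₀ ℝ) →ₗ[ℝ] (ι →₀ ℝ) :=
  Finsupp.lsum ℝ fun i => (if i ∈ Z then (2 : ℝ) else 1) • Finsupp.lsingle i

lemma scaleNull_single (i : ι) (r : ℝ) :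
    scaleNull Z (Finsupp.single i r) = (if i ∈ Z then (2 : ℝ) else 1) • Finsupp.single i r := by
  rw [scaleNull, Finsupp.lsum_single, LinearMap.smul_apply, Finsupp.lsingle_apply]

lemma cliffordQ_scaleNull (hZ : ∀ i ∈ Z, cliffordWeight P M i = 0) (x : ι →₀ ℝ) :
    cliffordQ P M (scaleNull Z x) = cliffordQ P M x := by
  have hB : (cliffordBilin P M).compl₁₂ (scaleNull Z) (scaleNull Z) = cliffordBilin P M := by
    refine LinearMap.ext_basis Finsupp.basisSingleOne Finsupp.basisSingleOne fun i j => ?_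
    simp only [Finsupp.coe_basisSingleOne, LinearMap.compl₁₂_apply, scaleNull_single,
      Finsupp.smul_single, smul_eq_mul, mul_one, cliffordBilin_single_left, Finsupp.single_apply]
    by_cases hji : j = i
    · by_cases hi : i ∈ Z <;> simp [hji, hi, hZ]
    · simp [hji]
  simp only [cliffordQ, LinearMap.BilinMap.toQuadraticMap_apply]
  exact LinearMap.congr_fun₂ hB x x

noncomputable def scaleNullAlgHom (hZ : ∀ i ∈ Z, cliffordWeight P M i = 0) :
    Cl P M →ₐ[ℝ] Cl P M :=
  CliffordAlgebra.map ⟨scaleNull Z, cliffordQ_scaleNull hZ⟩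

lemma scaleNullAlgHom_genWord (hZ : ∀ i ∈ Z, cliffordWeight P M i = 0) (l : List ι) :
    scaleNullAlgHom hZ (genWord P M l) = (2 : ℝ) ^ l.countP (· ∈ Z) • genWord P M l := by
  induction l with
  | nil => simp
  | cons a l ih =>
    have ha : scaleNullAlgHom hZ (gen P M a) = (if a ∈ Z then (2 : ℝ) else 1) • gen P M a := by
      rw [gen, scaleNullAlgHom, CliffordAlgebra.map_apply_ι]
      exact (congrArg _ (scaleNull_single a 1)).trans (map_smul _ _ _)
    rw [genWord_cons, map_mul, ha, ih, smul_mul_smul_comm, List.countP_cons]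
    split_ifs <;> simp_all [pow_succ']

variable [LinearOrder ι]

lemma prodGen_mul_prodGen_mul_prodGen (I J K : Finset ι) :
    prodGen P M I * prodGen P M J * prodGen P M K =
      genWord P M (I.sort (· ≤ ·) ++ J.sort (· ≤ ·) ++ K.sort (· ≤ ·)) := by
  rw [genWord_append, genWord_append]; rfl

lemma nodup_sort_append_sort_append_sort (hPM : Disjoint P M) (hPZ : Disjoint P Z)
    (hMZ : Disjoint M Z) {I J K : Finset ι} (hI : ↑I ⊆ P) (hJ : ↑J ⊆ M) (hK : ↑K ⊆ Z) :
    (I.sort (· ≤ ·) ++ J.sort (· ≤ ·) ++ K.sort (· ≤ ·)).Nodup := by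
  simp only [List.nodup_append, Finset.sort_nodup, Finset.mem_sort, List.mem_append, true_and]
  refine ⟨fun a ha b hb => hPM.ne_of_mem (hI ha) (hJ hb), ?_⟩
  rintro a (ha | ha) b hb
  · exact hPZ.ne_of_mem (hI ha) (hK hb)
  · exact hMZ.ne_of_mem (hJ ha) (hK hb)

lemma countP_sort_append_sort_append_sort (hPZ : Disjoint P Z) (hMZ : Disjoint M Z)
    {I J K : Finset ι} (hI : ↑I ⊆ P) (hJ : ↑J ⊆ M) (hK : ↑K ⊆ Z) :
    (I.sort (· ≤ ·) ++ J.sort (· ≤ ·) ++ K.sort (· ≤ ·)).countP (· ∈ Z) = K.card := by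
  have hI' : (I.sort (· ≤ ·)).countP (· ∈ Z) = 0 :=
    List.countP_eq_zero.mpr fun a ha => by
      simpa using hPZ.notMem_of_mem_left (hI ((Finset.mem_sort _).mp ha))
  have hJ' : (J.sort (· ≤ ·)).countP (· ∈ Z) = 0 :=
    List.countP_eq_zero.mpr fun a ha => by
      simpa using hMZ.notMem_of_mem_left (hJ ((Finset.mem_sort _).mp ha))
  have hK' : (K.sort (· ≤ ·)).countP (· ∈ Z) = K.card :=
    (List.countP_eq_length.mpr fun a ha => by simpa using hK ((Finset.mem_sort _).mp ha)).trans
      (Finset.length_sort _)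
  rw [List.countP_append, List.countP_append, hI', hJ', hK', zero_add, zero_add]

lemma gradePiece_le_of_forall_genWord_mem (hPM : Disjoint P M) (hPZ : Disjoint P Z)
    (hMZ : Disjoint M Z) {n : ℕ} {N : Submodule ℝ (Cl P M)}
    (h : ∀ l : List ι, l.Nodup → l.countP (· ∈ Z) = n → genWord P M l ∈ N) :
    gradePiece P M Z n ≤ N := by
  refine Submodule.span_le.mpr ?_
  rintro _ ⟨I, J, K, hI, hJ, hK, rfl, rfl⟩
  rw [prodGen_mul_prodGen_mul_prodGen]
  exact h _ (nodup_sort_append_sort_append_sort hPM hPZ hMZ hI hJ hK)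
    (countP_sort_append_sort_append_sort hPZ hMZ hI hJ hK)

lemma genWord_mem_gradePiece (hPM : Disjoint P M) (hPZ : Disjoint P Z) (hMZ : Disjoint M Z)
    (hU : P ∪ M ∪ Z = Set.univ) {l : List ι} (hl : l.Nodup) :
    genWord P M l ∈ gradePiece P M Z (l.countP (· ∈ Z)) := by
  set I := l.toFinset.filter (· ∈ P)
  set J := l.toFinset.filter (· ∈ M)
  set K := l.toFinset.filter (· ∈ Z)
  have hI : ↑I ⊆ P := fun a ha => (Finset.mem_filter.mp ha).2
  have hJ : ↑J ⊆ M := fun a ha => (Finset.mem_filter.mp ha).2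
  have hK : ↑K ⊆ Z := fun a ha => (Finset.mem_filter.mp ha).2
  have hperm : l.Perm (I.sort (· ≤ ·) ++ J.sort (· ≤ ·) ++ K.sort (· ≤ ·)) := by
    refine List.perm_of_nodup_nodup_toFinset_eq hl
      (nodup_sort_append_sort_append_sort hPM hPZ hMZ hI hJ hK) ?_
    ext a
    have ha : a ∈ P ∪ M ∪ Z := hU ▸ Set.mem_univ a
    simp only [List.toFinset_append, Finset.sort_toFinset, Finset.mem_union, Finset.mem_filter,
      I, J, K, Set.mem_union] at ha ⊢
    tauto
  have hcount : l.countP (· ∈ Z) = K.card :=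
    (hperm.countP_eq _).trans (countP_sort_append_sort_append_sort hPZ hMZ hI hJ hK)
  have hbasis : prodGen P M I * prodGen P M J * prodGen P M K ∈ gradePiece P M Z K.card :=
    Submodule.subset_span ⟨I, J, K, hI, hJ, hK, rfl, rfl⟩
  rw [prodGen_mul_prodGen_mul_prodGen] at hbasis
  rw [hcount]
  rcases genWord_eq_or_eq_neg_of_perm hperm hl with h | h <;> rw [h]
  · exact hbasis
  · exact neg_mem hbasis

section Grading

variable (hPM : Disjoint P M) (hPZ : Disjoint P Z) (hMZ : Disjoint M Z)
  (hU : P ∪ M ∪ Z = Set.univ)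
include hPM hPZ hMZ hU

lemma gen_mul_genWord_mem_gradePiece (a : ι) {l : List ι} (hl : l.Nodup) :
    gen P M a * genWord P M l ∈ gradePiece P M Z (l.countP (· ∈ Z) + if a ∈ Z then 1 else 0) := by
  by_cases hal : a ∈ l
  · have hperm := List.perm_cons_erase hal
    have hsq : gen P M a * genWord P M (a :: l.erase a) =
        cliffordWeight P M a • genWord P M (l.erase a) := by
      rw [genWord_cons, ← mul_assoc, gen_mul_self, Algebra.smul_def]
    have hmem : cliffordWeight P M a • genWord P M (l.erase a) ∈
        gradePiece P M Z (l.countP (· ∈ Z) + if a ∈ Z then 1 else 0) := by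
      by_cases haZ : a ∈ Z
      · rw [cliffordWeight_eq_zero_of_mem hPZ hMZ haZ, zero_smul]
        exact zero_mem _
      · have hcount : (l.erase a).countP (· ∈ Z) = l.countP (· ∈ Z) := by
          simp [hperm.countP_eq, haZ]
        rw [if_neg haZ, add_zero, ← hcount]
        exact Submodule.smul_mem _ _ (genWord_mem_gradePiece hPM hPZ hMZ hU (hl.erase a))
    rcases genWord_eq_or_eq_neg_of_perm hperm hl with h | h
    · rwa [h, hsq]
    · rw [h, mul_neg, hsq]
      exact neg_mem hmem
  · have hcount : (a :: l).countP (· ∈ Z) = l.countP (· ∈ Z) + if a ∈ Z then 1 else 0 := by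
      simp [List.countP_cons]
    rw [← genWord_cons, ← hcount]
    exact genWord_mem_gradePiece hPM hPZ hMZ hU (List.nodup_cons.mpr ⟨hal, hl⟩)

lemma gen_mul_mem_gradePiece (a : ι) {n : ℕ} {x : Cl P M} (hx : x ∈ gradePiece P M Z n) :
    gen P M a * x ∈ gradePiece P M Z (n + if a ∈ Z then 1 else 0) := by
  refine gradePiece_le_of_forall_genWord_mem hPM hPZ hMZ
    (N := (gradePiece P M Z _).comap (LinearMap.mulLeft ℝ (gen P M a))) ?_ hx
  rintro l hl rfl
  exact gen_mul_genWord_mem_gradePiece hPM hPZ hMZ hU a hl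

lemma genWord_mul_mem_gradePiece (l : List ι) {n : ℕ} {y : Cl P M}
    (hy : y ∈ gradePiece P M Z n) :
    genWord P M l * y ∈ gradePiece P M Z (l.countP (· ∈ Z) + n) := by
  induction l with
  | nil => simpa using hy
  | cons a l ih =>
    have h := gen_mul_mem_gradePiece hPM hPZ hMZ hU a ih
    rw [genWord_cons, mul_assoc]
    convert h using 2
    simp only [List.countP_cons, decide_eq_true_eq]
    omega

lemma gradePiece_mul {m n : ℕ} {x y : Cl P M} (hx : x ∈ gradePiece P M Z m)
    (hy : y ∈ gradePiece P M Z n) : x * y ∈ gradePiece P M Z (m + n) := by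
  refine gradePiece_le_of_forall_genWord_mem hPM hPZ hMZ
    (N := (gradePiece P M Z _).comap (LinearMap.mulRight ℝ y)) ?_ hx
  rintro l - rfl
  exact genWord_mul_mem_gradePiece hPM hPZ hMZ hU l hy

lemma gen_mem_gradePiece (i : ι) : gen P M i ∈ gradePiece P M Z ([i].countP (· ∈ Z)) := by
  simpa [genWord] using genWord_mem_gradePiece hPM hPZ hMZ hU (List.nodup_singleton i)

end Grading

lemma iSupIndep_gradePiece (hPZ : Disjoint P Z) (hMZ : Disjoint M Z) :
    iSupIndep (fun i : {i : ℕ // 1 ≤ i} => gradePiece P M Z i) := by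
  have hZ : ∀ i ∈ Z, cliffordWeight P M i = 0 := fun i => cliffordWeight_eq_zero_of_mem hPZ hMZ
  have hinj : Function.Injective fun i : {i : ℕ // 1 ≤ i} => (2 : ℝ) ^ (i : ℕ) :=
    fun a b h => Subtype.ext (pow_right_injective₀ two_pos (by norm_num) h)
  refine ((Module.End.eigenspaces_iSupIndep (scaleNullAlgHom hZ).toLinearMap).comp hinj).mono
    fun i => Submodule.span_le.mpr ?_
  rintro _ ⟨I, J, K, hI, hJ, hK, hcard, rfl⟩
  rw [SetLike.mem_coe, Function.comp_apply, Module.End.mem_eigenspace_iff,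
    prodGen_mul_prodGen_mul_prodGen]
  have := scaleNullAlgHom_genWord hZ (I.sort (· ≤ ·) ++ J.sort (· ≤ ·) ++ K.sort (· ≤ ·))
  rwa [countP_sort_append_sort_append_sort hPZ hMZ hI hJ hK, hcard] at this

section Ideal

variable (hPM : Disjoint P M) (hPZ : Disjoint P Z) (hMZ : Disjoint M Z)

include hPM hPZ hMZ in
lemma iSup_gradePiece_le_span_nilGenIdeal :
    ⨆ i : {i : ℕ // 1 ≤ i}, gradePiece P M Z i ≤
      Submodule.span ℝ (nilGenIdeal P M Z : Set (Cl P M)) := by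
  refine iSup_le fun i => gradePiece_le_of_forall_genWord_mem hPM hPZ hMZ fun l _ hl =>
    Submodule.subset_span ?_
  obtain ⟨k, hkl, hkZ⟩ := List.countP_pos_iff.mp (hl ▸ i.2 : 0 < l.countP (· ∈ Z))
  obtain ⟨s, t, rfl⟩ := List.append_of_mem hkl
  rw [genWord_append, genWord_cons, ← mul_assoc]
  exact TwoSidedIdeal.mul_mem_right _ _ _ (TwoSidedIdeal.mul_mem_left _ _ _
    (TwoSidedIdeal.subset_span ⟨k, by simpa using hkZ, rfl⟩))

variable (hU : P ∪ M ∪ Z = Set.univ)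
include hPM hPZ hMZ hU

lemma mul_gradePiece_le (m n : ℕ) :
    gradePiece P M Z m * gradePiece P M Z n ≤ gradePiece P M Z (m + n) :=
  Submodule.mul_le.mpr fun _ hx _ hy => gradePiece_mul hPM hPZ hMZ hU hx hy

lemma iSup_gradePiece_eq_top : ⨆ n, gradePiece P M Z n = ⊤ := by
  set S := ⨆ n, gradePiece P M Z n
  have hS : ∀ {n x}, x ∈ gradePiece P M Z n → x ∈ S := fun hx => Submodule.mem_iSup_of_mem _ hx
  have hmul : S * S ≤ S := by
    rw [Submodule.iSup_mul]
    refine iSup_le fun m => ?_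
    rw [Submodule.mul_iSup]
    exact iSup_le fun n => (mul_gradePiece_le hPM hPZ hMZ hU m n).trans (le_iSup _ (m + n))
  have hone : (1 : Cl P M) ∈ gradePiece P M Z 0 := by
    simpa using genWord_mem_gradePiece hPM hPZ hMZ hU (List.nodup_nil (α := ι))
  let A := S.toSubalgebra (hS hone) fun x y hx hy => hmul (Submodule.mul_mem_mul hx hy)
  have hA : Algebra.adjoin ℝ (Set.range (CliffordAlgebra.ι (cliffordQ P M))) ≤ A := by
    refine Algebra.adjoin_le ?_
    rintro _ ⟨v, rfl⟩
    induction v using Finsupp.induction_linear with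
    | zero => simp [zero_mem A]
    | add v w hv hw => simpa using add_mem hv hw
    | single i r =>
      have : CliffordAlgebra.ι (cliffordQ P M) (Finsupp.single i r) = r • gen P M i := by
        rw [gen, ← map_smul, Finsupp.smul_single_one]
      rw [this]
      exact Subalgebra.smul_mem A (hS (gen_mem_gradePiece hPM hPZ hMZ hU i)) r
  rw [CliffordAlgebra.adjoin_range_ι] at hA
  exact eq_top_iff.mpr fun x _ => hA (Algebra.mem_top (x := x))

lemma span_nilGenIdeal_le_iSup_gradePiece :
    Submodule.span ℝ (nilGenIdeal P M Z : Set (Cl P M)) ≤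
      ⨆ i : {i : ℕ // 1 ≤ i}, gradePiece P M Z i := by
  set T := ⨆ i : {i : ℕ // 1 ≤ i}, gradePiece P M Z i
  have hT : ⊤ * gradePiece P M Z 1 * ⊤ ≤ T := by
    rw [← iSup_gradePiece_eq_top hPM hPZ hMZ hU, Submodule.iSup_mul, Submodule.iSup_mul]
    refine iSup_le fun m => ?_
    rw [Submodule.mul_iSup]
    refine iSup_le fun n => ?_
    calc gradePiece P M Z m * gradePiece P M Z 1 * gradePiece P M Z n
        ≤ gradePiece P M Z (m + 1) * gradePiece P M Z n :=
          mul_le_mul' (mul_gradePiece_le hPM hPZ hMZ hU m 1) le_rfl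
      _ ≤ gradePiece P M Z (m + 1 + n) := mul_gradePiece_le hPM hPZ hMZ hU _ n
      _ ≤ T := le_iSup_of_le (ι := {i : ℕ // 1 ≤ i}) ⟨m + 1 + n, by omega⟩ le_rfl
  refine Submodule.span_le.mpr fun x hx => ?_
  refine (AddSubgroup.closure_le T.toAddSubgroup).mpr ?_
    (TwoSidedIdeal.mem_span_iff_mem_addSubgroup_closure.mp hx)
  rintro _ ⟨_, ⟨a, -, _, ⟨k, hk, rfl⟩, rfl⟩, b, -, rfl⟩
  refine hT (Submodule.mul_mem_mul (Submodule.mul_mem_mul trivial ?_) trivial)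
  simpa [hk] using gen_mem_gradePiece hPM hPZ hMZ hU k

end Ideal

/-- STATEMENT 17: the nil radical `R` is graded, `R = ⊕_{i ≥ 1} R_i`, and
`R_i · R_j ⊆ R_{i+j}`. -/
theorem nilradical_grading {ι : Type} [LinearOrder ι] (P M Z : Set ι)
    (hPM : Disjoint P M) (hPZ : Disjoint P Z) (hMZ : Disjoint M Z)
    (hU : P ∪ M ∪ Z = Set.univ) :
    iSupIndep (fun i : {i : ℕ // 1 ≤ i} => gradePiece P M Z i) ∧
    (⨆ i : {i : ℕ // 1 ≤ i}, gradePiece P M Z i) =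
      Submodule.span ℝ (nilGenIdeal P M Z : Set (Cl P M)) ∧
    ∀ i j : ℕ, 1 ≤ i → 1 ≤ j →
      ∀ x ∈ gradePiece P M Z i, ∀ y ∈ gradePiece P M Z j,
        x * y ∈ gradePiece P M Z (i + j) :=
  ⟨iSupIndep_gradePiece hPZ hMZ,
    le_antisymm (iSup_gradePiece_le_span_nilGenIdeal hPM hPZ hMZ)
      (span_nilGenIdeal_le_iSup_gradePiece hPM hPZ hMZ hU),
    fun _ _ _ _ _ hx _ hy => gradePiece_mul hPM hPZ hMZ hU hx hy⟩
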